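/- Every continuous function f : ℝ → ℝ satisfying f(x+1) − f(x) = Π₀(x) for all x, where Π₀ is continuous, 1-periodic and Π₀(0)=0, is of the form f(x) = P(x) + ⌊x⌋·Π₀(x) for some continuous 1-periodic function P. -/

import Mathlib

/-! Since the increment of `f` is `1`-periodic, `f (x + n) = f x + n * Pi0 x` for all `n : ℤ`;
taking `n = ⌊x⌋` at `Int.fract x` gives the decomposition with `P = f ∘ Int.fract`, which is
continuous because `f 1 = f 0 + Pi0 0 = f 0`. -/

open Function

theorem Function.Periodic.add_zsmul_eq_of_add_eq_add {α β : Type*} [AddGroup α] [AddCommGroup β]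
    {f g : α → β} {c : α} (hg : Periodic g c) (hf : ∀ x, f (x + c) = f x + g x) (n : ℤ) (x : α) :
    f (x + n • c) = f x + n • g x := by
  induction n using Int.induction_on with
  | zero => simp
  | succ k ih =>
    rw [add_zsmul, one_zsmul, ← add_assoc, hf, ih, hg.zsmul k x, add_zsmul, one_zsmul, add_assoc]
  | pred k ih =>
    have hstep := hf (x + (-(k : ℤ) - 1) • c)
    rw [add_assoc, ← add_one_zsmul, sub_add_cancel, ih, hg.zsmul] at hstep
    rw [eq_sub_of_add_eq hstep.symm, sub_zsmul, one_zsmul]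
    abel

theorem Function.Periodic.add_int_mul_eq_of_add_eq_add {α β : Type*} [Ring α] [Ring β]
    {f g : α → β} {c : α} (hg : Periodic g c) (hf : ∀ x, f (x + c) = f x + g x) (n : ℤ) (x : α) :
    f (x + n * c) = f x + n * g x := by
  simpa only [zsmul_eq_mul] using hg.add_zsmul_eq_of_add_eq_add hf n x

theorem Function.Periodic.eq_fract_add_floor_mul_of_add_one_eq_add {α β : Type*} [Ring α]
    [LinearOrder α] [IsStrictOrderedRing α] [FloorRing α] [Ring β] {f g : α → β}
    (hg : Periodic g 1) (hf : ∀ x, f (x + 1) = f x + g x) (x : α) :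
    f x = f (Int.fract x) + ⌊x⌋ * g x := by
  have h := hg.add_int_mul_eq_of_add_eq_add hf ⌊x⌋ (Int.fract x)
  have hfract : g (Int.fract x) = g x := by
    simpa only [mul_one, ← Int.self_sub_floor] using hg.sub_int_mul_eq ⌊x⌋ (x := x)
  rwa [mul_one, Int.fract_add_floor, hfract] at h

theorem stmt2_general (Pi0 f : ℝ → ℝ)
    (hper : ∀ x : ℝ, Pi0 (x + 1) = Pi0 x) (h0 : Pi0 0 = 0)
    (hfc : Continuous f) (hf : ∀ x : ℝ, f (x + 1) - f x = Pi0 x) :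
    ∃ P : ℝ → ℝ, Continuous P ∧ (∀ x : ℝ, P (x + 1) = P x) ∧
      ∀ x : ℝ, f x = P x + (⌊x⌋ : ℝ) * Pi0 x := by
  have hstep : ∀ x, f (x + 1) = f x + Pi0 x := fun x => by rw [← hf x, add_sub_cancel]
  have hf01 : f 0 = f 1 := by rw [← zero_add 1, hstep, h0, add_zero]
  exact ⟨f ∘ Int.fract, hfc.continuousOn.comp_fract'' hf01,
    fun x => congrArg f (Int.fract_add_one x),
    Periodic.eq_fract_add_floor_mul_of_add_one_eq_add hper hstep⟩

theorem stmt2 (Pi0 f : ℝ → ℝ) (hPic : Continuous Pi0)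
    (hper : ∀ x : ℝ, Pi0 (x + 1) = Pi0 x) (h0 : Pi0 0 = 0)
    (hfc : Continuous f) (hf : ∀ x : ℝ, f (x + 1) - f x = Pi0 x) :
    ∃ P : ℝ → ℝ, Continuous P ∧ (∀ x : ℝ, P (x + 1) = P x) ∧
      ∀ x : ℝ, f x = P x + (⌊x⌋ : ℝ) * Pi0 x :=
  stmt2_general Pi0 f hper h0 hfc hf
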